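/- Fix β₀ ∈ ℝ^K, σ₀ > 0, c ∈ ℝ, and set δ₀ = β₀/σ₀, γ₀ = 1/σ₀. For every constant C₂ with 0 < C₂ < γ₀, every x ∈ ℝ^K, every e ∈ ℝ with y = xᵀβ₀ + e, and every (δ, γ) ∈ ℝ^K × ℝ with |γ − γ₀| < C₂, the truncated-regression Hessian satisfies the Frobenius-norm bound ‖H(y, x; δ, γ)‖ ≤ (2√2 + √(K+2)·C̃)·‖x xᵀ‖ + 2√(K+2)·e² + √2/(γ₀ − C₂)² + √(K+1)·c², where C̃ = 2‖δ₀‖²/γ₀². -/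

import Mathlib

open MeasureTheory ProbabilityTheory Real Filter Set

noncomputable section

/-- The standard normal density `φ`. -/
def gPDF (t : ℝ) : ℝ := (Real.sqrt (2 * Real.pi))⁻¹ * Real.exp (-t ^ 2 / 2)

/-- The standard normal cumulative distribution function `Φ`. -/
def gCDF (t : ℝ) : ℝ := ∫ s in Set.Iic t, gPDF s

/-- The inverse Mills ratio `λ(v) = φ(v)/(1 - Φ(v))`. -/
def mills (v : ℝ) : ℝ := gPDF v / (1 - gCDF v)

/-- Euclidean norm of a vector in `ℝ^n`. -/
def vnorm {n : ℕ} (x : Fin n → ℝ) : ℝ := Real.sqrt (∑ i, (x i) ^ 2)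

/-- Frobenius (Euclidean) norm of a real matrix. -/
def frob {m n : Type*} [Fintype m] [Fintype n] (M : Matrix m n ℝ) : ℝ :=
  Real.sqrt (∑ i, ∑ j, (M i j) ^ 2)

/-- Dot product `xᵀδ`. -/
def dotp {n : ℕ} (x δ : Fin n → ℝ) : ℝ := ∑ i, x i * δ i

/-- The block matrix `[[x xᵀ, -y·x], [-y·xᵀ, γ⁻² + y²]]`. -/
def blockA (K : ℕ) (x : Fin K → ℝ) (y γ : ℝ) :
    Matrix (Fin K ⊕ Unit) (Fin K ⊕ Unit) ℝ :=
  Matrix.fromBlocks (Matrix.vecMulVec x x) (Matrix.of fun i _ => -(y * x i))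
    (Matrix.of fun _ j => -(y * x j)) (Matrix.of fun _ _ => γ⁻¹ ^ 2 + y ^ 2)

/-- The block matrix `[[x xᵀ, -c·x], [-c·xᵀ, c²]]`. -/
def blockB (K : ℕ) (x : Fin K → ℝ) (c : ℝ) :
    Matrix (Fin K ⊕ Unit) (Fin K ⊕ Unit) ℝ :=
  Matrix.fromBlocks (Matrix.vecMulVec x x) (Matrix.of fun i _ => -(c * x i))
    (Matrix.of fun _ j => -(c * x j)) (Matrix.of fun _ _ => c ^ 2)

/-- The Hessian of the reparameterized log conditional likelihood of the truncated
regression model, `H(y, x; δ, γ)` with `v = γc - xᵀδ`. -/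
def truncHess (K : ℕ) (c y : ℝ) (x δ : Fin K → ℝ) (γ : ℝ) :
    Matrix (Fin K ⊕ Unit) (Fin K ⊕ Unit) ℝ :=
  -(blockA K x y γ) +
    (mills (γ * c - dotp x δ) * (mills (γ * c - dotp x δ) - (γ * c - dotp x δ))) • blockB K x c

/-- The Hessian of the reparameterized log conditional likelihood of the Tobit model,
`H(y, x, d; δ, γ)` with `v = γc - xᵀδ`. -/
def tobitHess (K : ℕ) (c y : ℝ) (x : Fin K → ℝ) (d : ℝ) (δ : Fin K → ℝ) (γ : ℝ) :
    Matrix (Fin K ⊕ Unit) (Fin K ⊕ Unit) ℝ :=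
  -((1 - d) • blockA K x y γ) -
    (d * mills (-(γ * c - dotp x δ)) * (mills (-(γ * c - dotp x δ)) + (γ * c - dotp x δ))) •
      blockB K x c

/-- The score of the reparameterized log conditional likelihood of the Tobit model,
`s(y, x, d; δ, γ)` with `v = γc - xᵀδ`. -/
def tobitScore (K : ℕ) (c y : ℝ) (x : Fin K → ℝ) (d : ℝ) (δ : Fin K → ℝ) (γ : ℝ) :
    Fin K ⊕ Unit → ℝ := fun j =>
  (1 - d) *
      Sum.elim (fun i => (γ * y - dotp x δ) * x i) (fun _ => 1 / γ - (γ * y - dotp x δ) * y) j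
    + d * mills (-(γ * c - dotp x δ)) * Sum.elim (fun i => -x i) (fun _ => c) j


open Topology

lemma gPDF_pos (t : ℝ) : 0 < gPDF t := by
  have h : 0 < Real.sqrt (2 * Real.pi) := Real.sqrt_pos.2 (by positivity)
  exact mul_pos (inv_pos.2 h) (Real.exp_pos _)

lemma gPDF_eq (t : ℝ) : gPDF t = (Real.sqrt (2 * Real.pi))⁻¹ * Real.exp (-(1/2) * t ^ 2) := by
  unfold gPDF; ring_nf

lemma continuous_gPDF : Continuous gPDF := by
  unfold gPDF; fun_prop

lemma integrable_gPDF : Integrable gPDF := by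
  have h := (integrable_exp_neg_mul_sq (show (0:ℝ) < 1/2 by norm_num)).const_mul
    ((Real.sqrt (2 * Real.pi))⁻¹)
  exact h.congr (Eventually.of_forall fun t => (gPDF_eq t).symm)

lemma integral_gPDF : ∫ t, gPDF t = 1 := by
  have h : ∫ t, gPDF t = (Real.sqrt (2 * Real.pi))⁻¹ * ∫ t : ℝ, Real.exp (-(1/2) * t ^ 2) := by
    rw [← integral_const_mul]
    exact integral_congr_ae (Eventually.of_forall fun t => gPDF_eq t)
  rw [h, integral_gaussian]
  rw [show Real.pi / (1/2) = 2 * Real.pi by ring]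
  exact inv_mul_cancel₀ (ne_of_gt (Real.sqrt_pos.2 (by positivity)))

lemma one_sub_gCDF (v : ℝ) : 1 - gCDF v = ∫ t in Ioi v, gPDF t := by
  have h := intervalIntegral.integral_Iic_add_Ioi (b := v) integrable_gPDF.integrableOn integrable_gPDF.integrableOn
  rw [integral_gPDF] at h
  unfold gCDF
  linarith

lemma Ioi_gPDF_pos (v : ℝ) : 0 < ∫ t in Ioi v, gPDF t := by
  rw [setIntegral_pos_iff_support_of_nonneg_ae
    (Eventually.of_forall fun t => (gPDF_pos t).le) integrable_gPDF.integrableOn]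
  have hs : Function.support gPDF = univ := Set.eq_univ_of_forall fun t => (gPDF_pos t).ne'
  rw [hs, Set.univ_inter, Real.volume_Ioi]
  exact ENNReal.zero_lt_top

lemma denom_pos (v : ℝ) : 0 < 1 - gCDF v := by
  rw [one_sub_gCDF]; exact Ioi_gPDF_pos v

lemma hasDerivAt_gPDF (t : ℝ) : HasDerivAt gPDF (-(t * gPDF t)) t := by
  have h1 : HasDerivAt (fun s : ℝ => -s ^ 2 / 2) (-t) t := by
    have := ((hasDerivAt_pow 2 t).neg.div_const 2)
    refine this.congr_deriv ?_
    simp; ring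
  have h2 := (h1.exp).const_mul ((Real.sqrt (2 * Real.pi))⁻¹)
  have : HasDerivAt gPDF ((Real.sqrt (2 * Real.pi))⁻¹ * (Real.exp (-t ^ 2 / 2) * -t)) t := h2
  convert this using 1
  unfold gPDF; ring

lemma tendsto_gPDF_atTop : Tendsto gPDF atTop (𝓝 0) := by
  have h1 : Tendsto (fun t : ℝ => -t ^ 2 / 2) atTop atBot := by
    have h0 : Tendsto (fun t : ℝ => t ^ 2) atTop atTop := tendsto_pow_atTop two_ne_zero
    have := (tendsto_neg_atBot_iff.2 h0).atBot_div_const (show (0:ℝ) < 2 by norm_num)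
    exact this.congr fun t => by ring
  have h2 := Real.tendsto_exp_atBot.comp h1
  have h3 := h2.const_mul ((Real.sqrt (2 * Real.pi))⁻¹)
  rw [mul_zero] at h3
  exact h3

lemma tendsto_mul_gPDF_atTop : Tendsto (fun t => t * gPDF t) atTop (𝓝 0) := by
  have h := rpow_mul_exp_neg_mul_sq_isLittleO_exp_neg (show (0:ℝ) < 1/2 by norm_num) 1
  have h2 : Tendsto (fun x : ℝ => Real.exp (-(1/2) * x)) atTop (𝓝 0) := by
    refine Real.tendsto_exp_atBot.comp ?_
    exact (tendsto_neg_atBot_iff.2 ((tendsto_id (α := ℝ)).atTop_div_const (show (0:ℝ) < 2 by norm_num))).congr fun x => by simp only [id_eq]; ring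
  have h3 := h.isBigO.trans_tendsto h2
  have h4 := h3.const_mul ((Real.sqrt (2 * Real.pi))⁻¹)
  rw [mul_zero] at h4
  apply h4.congr fun x => ?_
  simp only [Real.rpow_one, gPDF_eq]
  ring

lemma integrable_mul_gPDF : Integrable (fun t => t * gPDF t) := by
  have h := (integrable_rpow_mul_exp_neg_mul_sq (show (0:ℝ) < 1/2 by norm_num)
    (show (-1:ℝ) < 1 by norm_num)).const_mul ((Real.sqrt (2 * Real.pi))⁻¹)
  apply h.congr (Eventually.of_forall fun t => ?_)
  simp only [Real.rpow_one, gPDF_eq]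
  ring

lemma integrable_abs_mul_gPDF : Integrable (fun t => |t| * gPDF t) := by
  apply integrable_mul_gPDF.abs.congr (Eventually.of_forall fun t => ?_)
  simp [abs_mul, abs_of_pos (gPDF_pos t)]

lemma integrable_sq_mul_gPDF : Integrable (fun t => t ^ 2 * gPDF t) := by
  have h := (integrable_rpow_mul_exp_neg_mul_sq (show (0:ℝ) < 1/2 by norm_num)
    (show (-1:ℝ) < 2 by norm_num)).const_mul ((Real.sqrt (2 * Real.pi))⁻¹)
  apply h.congr (Eventually.of_forall fun t => ?_)
  simp only [Real.rpow_two, gPDF_eq]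
  ring

lemma integral_Ioi_mul_gPDF (v : ℝ) : ∫ t in Ioi v, t * gPDF t = gPDF v := by
  have h := integral_Ioi_of_hasDerivAt_of_tendsto' (f := fun t => -gPDF t)
    (f' := fun t => t * gPDF t) (a := v) (m := 0)
    (fun x _ => by have := (hasDerivAt_gPDF x).neg; simp only [neg_neg] at this; exact this)
    integrable_mul_gPDF.integrableOn
    (by simpa using tendsto_gPDF_atTop.neg)
  simpa using h

lemma integral_Ioi_sq_mul_gPDF (v : ℝ) :
    ∫ t in Ioi v, t ^ 2 * gPDF t = v * gPDF v + ∫ t in Ioi v, gPDF t := by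
  have hd : ∀ x ∈ Ici v, HasDerivAt (fun t => -(t * gPDF t)) (x ^ 2 * gPDF x - gPDF x) x := by
    intro x _
    have := ((hasDerivAt_id x).mul (hasDerivAt_gPDF x)).neg
    refine this.congr_deriv ?_
    simp only [id_eq]
    ring
  have h := integral_Ioi_of_hasDerivAt_of_tendsto' (m := 0) hd
    ((integrable_sq_mul_gPDF.sub integrable_gPDF).integrableOn)
    (by simpa using tendsto_mul_gPDF_atTop.neg)
  rw [integral_sub integrable_sq_mul_gPDF.integrableOn integrable_gPDF.integrableOn] at h
  simp only [zero_sub, neg_neg] at h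
  linarith

lemma gPDF_sq_le (v : ℝ) :
    gPDF v ^ 2 ≤ (v * gPDF v + ∫ t in Ioi v, gPDF t) * (∫ t in Ioi v, gPDF t) := by
  set μ := (volume : Measure ℝ).restrict (Ioi v) with hμ
  set f : ℝ → ℝ := fun t => |t| * Real.sqrt (gPDF t) with hf
  set g : ℝ → ℝ := fun t => Real.sqrt (gPDF t) with hg
  have hfc : Continuous f := continuous_abs.mul (Real.continuous_sqrt.comp continuous_gPDF)
  have hgc : Continuous g := Real.continuous_sqrt.comp continuous_gPDF
  have hf2 : ∀ t, f t ^ 2 = t ^ 2 * gPDF t := fun t => by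
    rw [hf]; rw [mul_pow, sq_abs, Real.sq_sqrt (gPDF_pos t).le]
  have hg2 : ∀ t, g t ^ 2 = gPDF t := fun t => Real.sq_sqrt (gPDF_pos t).le
  have hfg : ∀ t, f t * g t = |t| * gPDF t := fun t => by
    rw [hf, hg, mul_assoc, Real.mul_self_sqrt (gPDF_pos t).le]
  have h2 : ENNReal.ofReal (2:ℝ) = 2 := by norm_num
  have hmf : MemLp f (ENNReal.ofReal 2) μ := by
    rw [h2, memLp_two_iff_integrable_sq hfc.aestronglyMeasurable]
    exact (integrable_sq_mul_gPDF.integrableOn).congr (Eventually.of_forall fun t => (hf2 t).symm)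
  have hmg : MemLp g (ENNReal.ofReal 2) μ := by
    rw [h2, memLp_two_iff_integrable_sq hgc.aestronglyMeasurable]
    exact (integrable_gPDF.integrableOn).congr (Eventually.of_forall fun t => (hg2 t).symm)
  have hpq : Real.HolderConjugate 2 2 := Real.holderConjugate_iff.mpr ⟨one_lt_two, by norm_num⟩
  have CS := integral_mul_le_Lp_mul_Lq_of_nonneg hpq
    (Eventually.of_forall fun t => mul_nonneg (abs_nonneg _) (Real.sqrt_nonneg _))
    (Eventually.of_forall fun t => Real.sqrt_nonneg _) hmf hmg
  -- rewrite integrals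
  have e1 : ∫ a, f a * g a ∂μ = ∫ t in Ioi v, |t| * gPDF t := by
    exact integral_congr_ae (Eventually.of_forall fun t => hfg t)
  have e2 : ∫ a, f a ^ (2:ℝ) ∂μ = v * gPDF v + ∫ t in Ioi v, gPDF t := by
    rw [← integral_Ioi_sq_mul_gPDF v]
    refine integral_congr_ae (Eventually.of_forall fun t => ?_)
    show f t ^ (2:ℝ) = t ^ 2 * gPDF t
    rw [Real.rpow_two, hf2 t]
  have e3 : ∫ a, g a ^ (2:ℝ) ∂μ = ∫ t in Ioi v, gPDF t := by
    refine integral_congr_ae (Eventually.of_forall fun t => ?_)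
    show g t ^ (2:ℝ) = gPDF t
    rw [Real.rpow_two, hg2 t]
  rw [e1, e2, e3] at CS
  have hA : 0 ≤ v * gPDF v + ∫ t in Ioi v, gPDF t := by
    rw [← integral_Ioi_sq_mul_gPDF v]
    exact setIntegral_nonneg measurableSet_Ioi fun t _ => mul_nonneg (sq_nonneg t) (gPDF_pos t).le
  have hB : 0 ≤ ∫ t in Ioi v, gPDF t := (Ioi_gPDF_pos v).le
  have hlow : gPDF v ≤ ∫ t in Ioi v, |t| * gPDF t := by
    rw [← integral_Ioi_mul_gPDF v]
    refine setIntegral_mono_on integrable_mul_gPDF.integrableOn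
      integrable_abs_mul_gPDF.integrableOn measurableSet_Ioi fun t _ => ?_
    exact mul_le_mul_of_nonneg_right (le_abs_self t) (gPDF_pos t).le
  have hup : (v * gPDF v + ∫ t in Ioi v, gPDF t) ^ (1/2:ℝ) * (∫ t in Ioi v, gPDF t) ^ (1/2:ℝ)
      = Real.sqrt ((v * gPDF v + ∫ t in Ioi v, gPDF t) * (∫ t in Ioi v, gPDF t)) := by
    rw [Real.sqrt_mul hA, Real.sqrt_eq_rpow, Real.sqrt_eq_rpow]
  have key : gPDF v ≤ Real.sqrt ((v * gPDF v + ∫ t in Ioi v, gPDF t) * (∫ t in Ioi v, gPDF t)) := by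
    rw [← hup]; exact hlow.trans CS
  calc gPDF v ^ 2 ≤ (Real.sqrt ((v * gPDF v + ∫ t in Ioi v, gPDF t) * (∫ t in Ioi v, gPDF t))) ^ 2 := by
        apply pow_le_pow_left₀ (gPDF_pos v).le key
    _ = _ := Real.sq_sqrt (mul_nonneg hA hB)

lemma mills_nonneg (v : ℝ) : 0 ≤ mills v :=
  div_nonneg (gPDF_pos v).le (denom_pos v).le

lemma mills_sub_nonneg (v : ℝ) : 0 ≤ mills v - v := by
  have hd := denom_pos v
  have key : v * (1 - gCDF v) ≤ gPDF v := by
    have e : gPDF v - v * (1 - gCDF v) = ∫ t in Ioi v, (t - v) * gPDF t := by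
      have e' : ∫ t in Ioi v, (t - v) * gPDF t
          = (∫ t in Ioi v, t * gPDF t) - ∫ t in Ioi v, v * gPDF t := by
        rw [← integral_sub integrable_mul_gPDF.integrableOn
          ((integrable_gPDF.integrableOn).const_mul v)]
        exact integral_congr_ae (Eventually.of_forall fun t => by ring)
      rw [e', integral_Ioi_mul_gPDF, integral_const_mul, one_sub_gCDF]
    have pos : 0 ≤ ∫ t in Ioi v, (t - v) * gPDF t := setIntegral_nonneg measurableSet_Ioi
      fun t ht => mul_nonneg (sub_nonneg.2 (le_of_lt ht)) (gPDF_pos t).le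
    linarith
  rw [mills, sub_nonneg, le_div_iff₀ hd]
  exact key

lemma mills_prod_nonneg (v : ℝ) : 0 ≤ mills v * (mills v - v) :=
  mul_nonneg (mills_nonneg v) (mills_sub_nonneg v)

lemma mills_prod_le_one (v : ℝ) : mills v * (mills v - v) ≤ 1 := by
  have hd := denom_pos v
  have e1 : mills v * (mills v - v)
      = (gPDF v ^ 2 - v * gPDF v * (1 - gCDF v)) / (1 - gCDF v) ^ 2 := by
    rw [mills]; field_simp
  rw [e1, div_le_one (by positivity)]
  have := gPDF_sq_le v
  rw [← one_sub_gCDF] at this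
  nlinarith

lemma sum_sq_mul {K : ℕ} (x : Fin K → ℝ) :
    ∑ i, ∑ j, (x i * x j) ^ 2 = (∑ i, x i ^ 2) ^ 2 := by
  rw [sq, Finset.sum_mul_sum]
  exact Finset.sum_congr rfl fun i _ => Finset.sum_congr rfl fun j _ => by ring

attribute [local instance] Matrix.frobeniusSeminormedAddCommGroup
  Matrix.frobeniusNormedAddCommGroup Matrix.frobeniusNormSMulClass Matrix.frobeniusNormedSpace

lemma frob_eq_norm {m n : Type*} [Fintype m] [Fintype n] (M : Matrix m n ℝ) : frob M = ‖M‖ := by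
  rw [Matrix.frobenius_norm_def, frob, Real.sqrt_eq_rpow]
  congr 1
  refine Finset.sum_congr rfl fun i _ => Finset.sum_congr rfl fun j _ => ?_
  rw [Real.norm_eq_abs, Real.rpow_two, sq_abs]

lemma frob_vecMulVec {K : ℕ} (x : Fin K → ℝ) :
    frob (Matrix.vecMulVec x x) = ∑ i, x i ^ 2 := by
  rw [frob]
  have e : ∑ i, ∑ j, (Matrix.vecMulVec x x i j) ^ 2 = (∑ i, x i ^ 2) ^ 2 := by
    simp only [Matrix.vecMulVec_apply]
    exact sum_sq_mul x
  rw [e, Real.sqrt_sq (Finset.sum_nonneg fun i _ => sq_nonneg _)]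

lemma frob_blockA {K : ℕ} (x : Fin K → ℝ) (y γ : ℝ) :
    frob (blockA K x y γ) = Real.sqrt ((∑ i, x i ^ 2) ^ 2 + 2 * y ^ 2 * (∑ i, x i ^ 2)
      + (γ⁻¹ ^ 2 + y ^ 2) ^ 2) := by
  rw [frob]
  congr 1
  rw [Fintype.sum_sum_type]
  simp only [Fintype.sum_sum_type, blockA, Matrix.fromBlocks_apply₁₁, Matrix.fromBlocks_apply₁₂,
    Matrix.fromBlocks_apply₂₁, Matrix.fromBlocks_apply₂₂, Matrix.vecMulVec_apply, Matrix.of_apply,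
    Finset.univ_unique, Finset.sum_singleton, Finset.sum_add_distrib]
  rw [sum_sq_mul]
  have h1 : ∑ i, (-(y * x i)) ^ 2 = y ^ 2 * ∑ i, x i ^ 2 := by
    rw [Finset.mul_sum]; exact Finset.sum_congr rfl fun i _ => by ring
  rw [h1]
  ring

lemma frob_blockB {K : ℕ} (x : Fin K → ℝ) (c : ℝ) :
    frob (blockB K x c) = (∑ i, x i ^ 2) + c ^ 2 := by
  rw [frob]
  have e : ∑ p, ∑ q, (blockB K x c p q) ^ 2 = ((∑ i, x i ^ 2) + c ^ 2) ^ 2 := by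
    rw [Fintype.sum_sum_type]
    simp only [Fintype.sum_sum_type, blockB, Matrix.fromBlocks_apply₁₁, Matrix.fromBlocks_apply₁₂,
      Matrix.fromBlocks_apply₂₁, Matrix.fromBlocks_apply₂₂, Matrix.vecMulVec_apply,
      Matrix.of_apply, Finset.univ_unique, Finset.sum_singleton, Finset.sum_add_distrib]
    rw [sum_sq_mul]
    have h1 : ∑ i, (-(c * x i)) ^ 2 = c ^ 2 * ∑ i, x i ^ 2 := by
      rw [Finset.mul_sum]; exact Finset.sum_congr rfl fun i _ => by ring
    rw [h1]
    ring
  rw [e, Real.sqrt_sq (by positivity)]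

lemma sqrt_add_le' {a b : ℝ} (ha : 0 ≤ a) (hb : 0 ≤ b) :
    Real.sqrt (a + b) ≤ Real.sqrt a + Real.sqrt b := by
  rw [show a + b = a + b by rfl]
  nlinarith [Real.sq_sqrt ha, Real.sq_sqrt hb, Real.sqrt_nonneg a, Real.sqrt_nonneg b,
    Real.sqrt_nonneg (a+b), Real.sq_sqrt (add_nonneg ha hb)]


set_option maxHeartbeats 1000000 in
/-- Pointwise Frobenius-norm bound for the truncated-regression Hessian on a
neighborhood `|γ - γ₀| < C₂` of the true parameters. -/
theorem truncHess_frob_bound (K : ℕ) (hK : 0 < K) (β₀ : Fin K → ℝ) (σ₀ : ℝ) (hσ : 0 < σ₀)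
    (c : ℝ) (δ₀ : Fin K → ℝ) (hδ₀ : δ₀ = fun i => β₀ i / σ₀) (γ₀ : ℝ) (hγ₀ : γ₀ = 1 / σ₀)
    (C₂ : ℝ) (hC₂ : 0 < C₂) (hC₂' : C₂ < γ₀)
    (x : Fin K → ℝ) (e y : ℝ) (hy : y = dotp x β₀ + e)
    (δ : Fin K → ℝ) (γ : ℝ) (hγ : |γ - γ₀| < C₂) :
    frob (truncHess K c y x δ γ) ≤
      (2 * Real.sqrt 2 + Real.sqrt ((K : ℝ) + 2) * (2 * vnorm δ₀ ^ 2 / γ₀ ^ 2)) *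
          frob (Matrix.vecMulVec x x)
        + 2 * Real.sqrt ((K : ℝ) + 2) * e ^ 2 + Real.sqrt 2 / (γ₀ - C₂) ^ 2
        + Real.sqrt ((K : ℝ) + 1) * c ^ 2 := by
  -- abbreviations
  have hSnn : 0 ≤ ∑ i, x i ^ 2 := Finset.sum_nonneg fun i _ => sq_nonneg _
  set v : ℝ := γ * c - dotp x δ with hvdef
  have hμ0 : 0 ≤ mills v * (mills v - v) := mills_prod_nonneg v
  have hμ1 : mills v * (mills v - v) ≤ 1 := mills_prod_le_one v
  set S : ℝ := ∑ i, x i ^ 2 with hSdef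
  -- Step 1 : triangle inequality
  have hH : truncHess K c y x δ γ
      = -(blockA K x y γ) + (mills v * (mills v - v)) • blockB K x c := rfl
  have step1 : frob (truncHess K c y x δ γ) ≤ frob (blockA K x y γ) + (S + c ^ 2) := by
    rw [hH, frob_eq_norm]
    calc ‖-(blockA K x y γ) + (mills v * (mills v - v)) • blockB K x c‖
        ≤ ‖-(blockA K x y γ)‖ + ‖(mills v * (mills v - v)) • blockB K x c‖ := norm_add_le _ _
      _ = ‖blockA K x y γ‖ + |mills v * (mills v - v)| * ‖blockB K x c‖ := by
          rw [norm_neg, norm_smul, Real.norm_eq_abs]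
      _ ≤ ‖blockA K x y γ‖ + 1 * ‖blockB K x c‖ := by
          have h1 : |mills v * (mills v - v)| ≤ 1 := abs_le.2 ⟨by linarith, hμ1⟩
          have h2 : (0:ℝ) ≤ ‖blockB K x c‖ := norm_nonneg _
          nlinarith
      _ = frob (blockA K x y γ) + (S + c ^ 2) := by
          rw [one_mul, ← frob_eq_norm, ← frob_eq_norm, frob_blockB]
  -- γ bounds
  have hγC : 0 < γ₀ - C₂ := by linarith
  have hγgt : γ₀ - C₂ < γ := by have := abs_lt.1 hγ; linarith
  have hγpos : 0 < γ := lt_trans hγC hγgt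
  have hinv : γ⁻¹ ^ 2 ≤ 1 / (γ₀ - C₂) ^ 2 := by
    rw [one_div, ← inv_pow]
    exact pow_le_pow_left₀ (inv_nonneg.2 hγpos.le) (inv_anti₀ hγC hγgt.le) 2
  -- Step 2 : bound on frob (blockA)
  have s2nn : (0:ℝ) ≤ Real.sqrt 2 := Real.sqrt_nonneg 2
  have step2 : frob (blockA K x y γ)
      ≤ Real.sqrt 2 * S + Real.sqrt 2 * y ^ 2 + Real.sqrt 2 * (1 / (γ₀ - C₂) ^ 2) := by
    rw [frob_blockA, ← hSdef]
    have h1 : S ^ 2 + 2 * y ^ 2 * S + (γ⁻¹ ^ 2 + y ^ 2) ^ 2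
        ≤ 2 * (S + y ^ 2) ^ 2 + 2 * (γ⁻¹ ^ 2) ^ 2 := by nlinarith [sq_nonneg S, sq_nonneg (y^2), sq_nonneg (γ⁻¹^2 - y^2), mul_nonneg hSnn (sq_nonneg y)]
    calc Real.sqrt (S ^ 2 + 2 * y ^ 2 * S + (γ⁻¹ ^ 2 + y ^ 2) ^ 2)
        ≤ Real.sqrt (2 * (S + y ^ 2) ^ 2 + 2 * (γ⁻¹ ^ 2) ^ 2) := Real.sqrt_le_sqrt h1
      _ ≤ Real.sqrt (2 * (S + y ^ 2) ^ 2) + Real.sqrt (2 * (γ⁻¹ ^ 2) ^ 2) :=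
          sqrt_add_le' (by positivity) (by positivity)
      _ = Real.sqrt 2 * (S + y ^ 2) + Real.sqrt 2 * (γ⁻¹ ^ 2) := by
          rw [Real.sqrt_mul (by norm_num), Real.sqrt_mul (by norm_num),
            Real.sqrt_sq (by positivity), Real.sqrt_sq (by positivity)]
      _ ≤ Real.sqrt 2 * S + Real.sqrt 2 * y ^ 2 + Real.sqrt 2 * (1 / (γ₀ - C₂) ^ 2) := by
          nlinarith
  -- Cauchy–Schwarz and parameter identities
  have CS : (dotp x β₀) ^ 2 ≤ S * (∑ i, β₀ i ^ 2) := by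
    rw [dotp, hSdef]
    exact Finset.sum_mul_sq_le_sq_mul_sq _ _ _
  have hBnn : 0 ≤ ∑ i, β₀ i ^ 2 := Finset.sum_nonneg fun i _ => sq_nonneg _
  have hσ' : σ₀ ≠ 0 := ne_of_gt hσ
  have hγ₀ne : γ₀ ≠ 0 := by rw [hγ₀]; positivity
  have hBeq : vnorm δ₀ ^ 2 / γ₀ ^ 2 = ∑ i, β₀ i ^ 2 := by
    have h1 : vnorm δ₀ ^ 2 = ∑ i, δ₀ i ^ 2 :=
      Real.sq_sqrt (Finset.sum_nonneg fun i _ => sq_nonneg _)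
    rw [h1]
    simp only [hδ₀]
    rw [hγ₀]
    have h2 : ∑ i, (β₀ i / σ₀) ^ 2 = (∑ i, β₀ i ^ 2) / σ₀ ^ 2 := by
      rw [Finset.sum_div]
      exact Finset.sum_congr rfl fun i _ => by field_simp
    rw [h2]
    field_simp
  have hy2 : y ^ 2 ≤ 2 * (S * (∑ i, β₀ i ^ 2)) + 2 * e ^ 2 := by
    have h1 : y ^ 2 ≤ 2 * (dotp x β₀) ^ 2 + 2 * e ^ 2 := by
      rw [hy]; nlinarith [sq_nonneg (dotp x β₀ - e)]
    linarith [CS]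
  -- comparisons between square roots
  have h12 : (1:ℝ) ≤ Real.sqrt 2 := by
    have : Real.sqrt 1 ≤ Real.sqrt 2 := Real.sqrt_le_sqrt (by norm_num)
    simpa using this
  have h2K2 : Real.sqrt 2 ≤ Real.sqrt ((K:ℝ) + 2) := by
    apply Real.sqrt_le_sqrt
    have : (0:ℝ) ≤ (K:ℝ) := Nat.cast_nonneg K
    linarith
  have h1K1 : (1:ℝ) ≤ Real.sqrt ((K:ℝ) + 1) := by
    have h0 : (0:ℝ) ≤ (K:ℝ) := Nat.cast_nonneg K
    have : Real.sqrt 1 ≤ Real.sqrt ((K:ℝ) + 1) := Real.sqrt_le_sqrt (by linarith)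
    simpa using this
  -- final assembly
  have hBeq2 : 2 * vnorm δ₀ ^ 2 / γ₀ ^ 2 = 2 * (∑ i, β₀ i ^ 2) := by
    rw [mul_div_assoc, hBeq]
  rw [frob_vecMulVec, ← hSdef, hBeq2]
  set B : ℝ := ∑ i, β₀ i ^ 2 with hBdef
  have key1 : Real.sqrt 2 * (S * B) ≤ Real.sqrt ((K:ℝ) + 2) * (S * B) :=
    mul_le_mul_of_nonneg_right h2K2 (mul_nonneg hSnn hBnn)
  have key2 : Real.sqrt 2 * e ^ 2 ≤ Real.sqrt ((K:ℝ) + 2) * e ^ 2 :=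
    mul_le_mul_of_nonneg_right h2K2 (sq_nonneg e)
  have key3 : c ^ 2 ≤ Real.sqrt ((K:ℝ) + 1) * c ^ 2 :=
    le_mul_of_one_le_left (sq_nonneg c) h1K1
  have key4 : S ≤ Real.sqrt 2 * S := le_mul_of_one_le_left hSnn h12
  have key5 : Real.sqrt 2 * y ^ 2 ≤ Real.sqrt 2 * (2 * (S * B) + 2 * e ^ 2) :=
    mul_le_mul_of_nonneg_left hy2 s2nn
  have step12 := le_trans step1 (by linarith : frob (blockA K x y γ) + (S + c ^ 2)
    ≤ Real.sqrt 2 * S + Real.sqrt 2 * y ^ 2 + Real.sqrt 2 * (1 / (γ₀ - C₂) ^ 2) + (S + c ^ 2))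
  have expand : Real.sqrt 2 / (γ₀ - C₂) ^ 2 = Real.sqrt 2 * (1 / (γ₀ - C₂) ^ 2) := by ring
  rw [expand]
  nlinarith [step12, key1, key2, key3, key4, key5]
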